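/- Let 𝓕 be an ω-closed family of nonempty inductive subsets of ω, and let S be a Hausdorff semitopological semigroup containing B_ω^𝓕 as a proper dense subsemigroup, i.e., there is an injective multiplication-preserving map φ : B_ω^𝓕 → S whose image is dense in S and not equal to S. Then I = S \ φ(B_ω^𝓕) is a closed two-sided ideal of S (I is closed in S, and x·y ∈ I whenever x ∈ I or y ∈ I). -/

import Mathlib

/-- For `n : ℕ` and `F ⊆ ω`, `wShift n F` is the set `(−n)+F = {x ∈ ω : x + n ∈ F}`. -/
def wShift (n : ℕ) (F : Set ℕ) : Set ℕ := {x | x + n ∈ F}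

/-- A family `𝓕` of subsets of `ω` is ω-closed if `F₁ ∩ ((−n)+F₂) ∈ 𝓕`
for all `n ∈ ω` and `F₁, F₂ ∈ 𝓕`. -/
def OmegaClosed (𝓕 : Set (Set ℕ)) : Prop :=
  ∀ n : ℕ, ∀ F₁ ∈ 𝓕, ∀ F₂ ∈ 𝓕, F₁ ∩ wShift n F₂ ∈ 𝓕

/-- A subset `F ⊆ ω` is inductive if `n ∈ F` implies `n+1 ∈ F`. -/
def InductiveSet (F : Set ℕ) : Prop := ∀ n : ℕ, n ∈ F → n + 1 ∈ F

/-- The underlying set `ω × ω × 𝓕` of the semigroup `B_ω^𝓕`. -/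
abbrev BF (𝓕 : Set (Set ℕ)) : Type := ℕ × ℕ × {F : Set ℕ // F ∈ 𝓕}

/-- The multiplication of the semigroup `B_ω^𝓕`:
`(i₁,j₁,F₁)·(i₂,j₂,F₂) = (i₁−j₁+i₂, j₂, ((j₁−i₂)+F₁) ∩ F₂)` if `j₁ ≤ i₂`, and
`(i₁, j₁−i₂+j₂, F₁ ∩ ((i₂−j₁)+F₂))` if `j₁ ≥ i₂`. -/
def BFmul {𝓕 : Set (Set ℕ)} (h : OmegaClosed 𝓕) (a b : BF 𝓕) : BF 𝓕 :=
  if a.2.1 ≤ b.1 then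
    (a.1 + (b.1 - a.2.1), b.2.1,
      ⟨wShift (b.1 - a.2.1) a.2.2.1 ∩ b.2.2.1, by
        rw [Set.inter_comm]; exact h _ _ b.2.2.2 _ a.2.2.2⟩)
  else
    (a.1, b.2.1 + (a.2.1 - b.1),
      ⟨a.2.2.1 ∩ wShift (a.2.1 - b.1) b.2.2.1, h _ _ a.2.2.2 _ b.2.2.2⟩)

/-!
Since every `F ∈ 𝓕` is a nonempty inductive set, it is a ray `[m, ∞)`, so an element of `B_ω^𝓕`
is determined by three natural numbers `(i, j, m)`. For each `c = (i, j, m)` there are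
idempotents `u`, `v` with `c·u ≠ c ≠ v·c` such that `x·u ≠ x ≠ v·x` for only finitely many `x`
(take `u = v = (0, 0, G)` with `min G > m + i + j` if such `G ∈ 𝓕` exists, and otherwise
`u = (j+1, j+1, F)`, `v = (i+1, i+1, F)`, as the third coordinates are then bounded); as the
fixed-point sets of translations are closed in a Hausdorff semitopological semigroup, `φ c` has a
neighbourhood meeting the dense image in a finite set, hence is an isolated point of `S`. So the
image is open and `I` is closed. Moreover the equations `b·x = d` and `x·b = d` have finitely
many solutions in `B_ω^𝓕`; the preimage of the open point `φ d` under a translation by `φ b`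
would therefore be an open set meeting the image finitely, so it cannot contain a point of `I`.
Hence `φ(B)·I ∪ I·φ(B) ⊆ I`, and `S·I ∪ I·S ⊆ I` follows by density and continuity.
-/

open Set

theorem InductiveSet.eq_Ici_sInf {F : Set ℕ} (hF : InductiveSet F) (hne : F.Nonempty) :
    F = Ici (sInf F) :=
  Subset.antisymm (fun _ h => Nat.sInf_le h)
    (fun n hn => Nat.le_induction (Nat.sInf_mem hne) (fun k _ ih => hF k ih) n hn)

theorem wShift_Ici (n a : ℕ) : wShift n (Ici a) = Ici (a - n) := by
  ext x
  simp only [wShift, mem_ofPred_eq, mem_Ici]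
  omega

namespace BF

variable {𝓕 : Set (Set ℕ)}

noncomputable def least (x : BF 𝓕) : ℕ := sInf x.2.2.1

noncomputable def coords (x : BF 𝓕) : ℕ × ℕ × ℕ := (x.1, x.2.1, least x)

theorem coords_injective (h𝓕 : ∀ F ∈ 𝓕, F = Ici (sInf F)) :
    Function.Injective (coords : BF 𝓕 → ℕ × ℕ × ℕ) := by
  rintro ⟨i, j, F, hF⟩ ⟨i', j', F', hF'⟩ h
  simp only [coords, least, Prod.mk.injEq] at h
  obtain ⟨rfl, rfl, hm⟩ := h
  have : F = F' := by rw [h𝓕 F hF, h𝓕 F' hF', hm]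
  subst this
  rfl

theorem finite_setOf_coords_le (h𝓕 : ∀ F ∈ 𝓕, F = Ici (sInf F)) (A B P : ℕ) :
    {x : BF 𝓕 | x.1 ≤ A ∧ x.2.1 ≤ B ∧ least x ≤ P}.Finite :=
  ((finite_Iic A).prod ((finite_Iic B).prod (finite_Iic P))).preimage
    (coords_injective h𝓕).injOn

variable (hcl : OmegaClosed 𝓕)

theorem mul_fst (x y : BF 𝓕) : (BFmul hcl x y).1 = x.1 + (y.1 - x.2.1) := by
  unfold BFmul
  split
  · rfl
  · dsimp only
    omega

theorem mul_snd (x y : BF 𝓕) : (BFmul hcl x y).2.1 = y.2.1 + (x.2.1 - y.1) := by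
  unfold BFmul
  split
  · dsimp only
    omega
  · rfl

theorem least_mul (h𝓕 : ∀ F ∈ 𝓕, F = Ici (sInf F)) (x y : BF 𝓕) :
    least (BFmul hcl x y) = max (least x - (y.1 - x.2.1)) (least y - (x.2.1 - y.1)) := by
  unfold BFmul least
  split
  · conv_lhs => simp only; rw [h𝓕 _ x.2.2.2, h𝓕 _ y.2.2.2]
    rw [wShift_Ici, Ici_inter_Ici, csInf_Ici]
    omega
  · conv_lhs => simp only; rw [h𝓕 _ x.2.2.2, h𝓕 _ y.2.2.2]
    rw [wShift_Ici, Ici_inter_Ici, csInf_Ici]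
    omega

theorem mul_idempotent_eq_self_iff (h𝓕 : ∀ F ∈ 𝓕, F = Ici (sInf F)) (x : BF 𝓕) (k : ℕ)
    (G : {F // F ∈ 𝓕}) :
    BFmul hcl x (k, k, G) = x ↔ k ≤ x.2.1 ∧ sInf G.1 ≤ least x + (x.2.1 - k) := by
  rw [← (coords_injective h𝓕).eq_iff]
  simp only [coords, Prod.ext_iff, mul_fst, mul_snd, least_mul hcl h𝓕]
  change _ ∧ _ ∧ max _ (sInf G.1 - _) = _ ↔ _
  omega

theorem idempotent_mul_eq_self_iff (h𝓕 : ∀ F ∈ 𝓕, F = Ici (sInf F)) (x : BF 𝓕) (k : ℕ)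
    (G : {F // F ∈ 𝓕}) :
    BFmul hcl (k, k, G) x = x ↔ k ≤ x.1 ∧ sInf G.1 ≤ least x + (x.1 - k) := by
  rw [← (coords_injective h𝓕).eq_iff]
  simp only [coords, Prod.ext_iff, mul_fst, mul_snd, least_mul hcl h𝓕]
  change _ ∧ _ ∧ max (sInf G.1 - _) _ = _ ↔ _
  omega

theorem finite_setOf_mul_left_eq (h𝓕 : ∀ F ∈ 𝓕, F = Ici (sInf F)) (b d : BF 𝓕) :
    {x : BF 𝓕 | BFmul hcl b x = d}.Finite := by
  refine (finite_setOf_coords_le h𝓕 (d.1 + b.2.1) d.2.1 (least d + b.2.1)).subset ?_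
  rintro x rfl
  simp only [mem_ofPred_eq, mul_fst, mul_snd, least_mul hcl h𝓕]
  omega

theorem finite_setOf_mul_right_eq (h𝓕 : ∀ F ∈ 𝓕, F = Ici (sInf F)) (b d : BF 𝓕) :
    {x : BF 𝓕 | BFmul hcl x b = d}.Finite := by
  refine (finite_setOf_coords_le h𝓕 d.1 (d.2.1 + b.1) (least d + b.1)).subset ?_
  rintro x rfl
  simp only [mem_ofPred_eq, mul_fst, mul_snd, least_mul hcl h𝓕]
  omega

theorem exists_finite_setOf_not_fixed (h𝓕 : ∀ F ∈ 𝓕, F = Ici (sInf F)) (c : BF 𝓕) :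
    ∃ u v : BF 𝓕, BFmul hcl c u ≠ c ∧ BFmul hcl v c ≠ c ∧
      {x | BFmul hcl x u ≠ x ∧ BFmul hcl v x ≠ x}.Finite := by
  by_cases hG : ∃ G : {F // F ∈ 𝓕}, least c + c.1 + c.2.1 < sInf G.1
  · obtain ⟨G, hG⟩ := hG
    refine ⟨(0, 0, G), (0, 0, G), ?_, ?_, ?_⟩
    · rw [Ne, mul_idempotent_eq_self_iff hcl h𝓕]
      omega
    · rw [Ne, idempotent_mul_eq_self_iff hcl h𝓕]
      omega
    · refine (finite_setOf_coords_le h𝓕 (sInf G.1) (sInf G.1) (sInf G.1)).subset ?_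
      intro x hx
      simp only [mem_ofPred_eq, Ne, mul_idempotent_eq_self_iff hcl h𝓕,
        idempotent_mul_eq_self_iff hcl h𝓕] at hx ⊢
      omega
  · simp only [not_exists, not_lt] at hG
    refine ⟨(c.2.1 + 1, c.2.1 + 1, c.2.2), (c.1 + 1, c.1 + 1, c.2.2), ?_, ?_, ?_⟩
    · rw [Ne, mul_idempotent_eq_self_iff hcl h𝓕]
      omega
    · rw [Ne, idempotent_mul_eq_self_iff hcl h𝓕]
      omega
    · refine (finite_setOf_coords_le h𝓕 (c.1 + least c) (c.2.1 + least c)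
        (least c + c.1 + c.2.1)).subset ?_
      intro x hx
      have hxc : least x ≤ least c + c.1 + c.2.1 := hG x.2.2
      have hc : sInf c.2.2.1 = least c := rfl
      simp only [mem_ofPred_eq, Ne, mul_idempotent_eq_self_iff hcl h𝓕,
        idempotent_mul_eq_self_iff hcl h𝓕, hc] at hx ⊢
      omega

end BF

section Topology

variable {X : Type*} [TopologicalSpace X] [T1Space X]

theorem Dense.subset_of_isOpen_of_finite_inter {D U : Set X} (hD : Dense D) (hU : IsOpen U)
    (hfin : (U ∩ D).Finite) : U ⊆ D := by
  intro y hy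
  by_contra hyD
  obtain ⟨z, ⟨hzU, hzD'⟩, hzD⟩ :=
    hD.inter_open_nonempty _ (hU.sdiff hfin.isClosed) ⟨y, hy, fun h => hyD h.2⟩
  exact hzD' ⟨hzU, hzD⟩

theorem Dense.isOpen_singleton_of_finite_inter {D U : Set X} (hD : Dense D) (hU : IsOpen U)
    (hfin : (U ∩ D).Finite) {x : X} (hx : x ∈ U) : IsOpen {x} :=
  isOpen_singleton_of_finite_mem_nhds x (hU.mem_nhds hx)
    (hfin.subset fun _ hy => ⟨hy, hD.subset_of_isOpen_of_finite_inter hU hfin hy⟩)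

theorem apply_notMem_range_of_finite_fibers {ι : Type*} {φ : ι → X}
    (hinj : Function.Injective φ) (hdense : Dense (range φ)) (hiso : ∀ d, IsOpen {φ d}) {f : X → X} (hf : Continuous f) {g : ι → ι}
    (hfg : ∀ x, f (φ x) = φ (g x)) (hg : ∀ d, {x | g x = d}.Finite) {s : X}
    (hs : s ∉ range φ) : f s ∉ range φ := by
  rintro ⟨d, hd⟩
  have hfin : (f ⁻¹' {φ d} ∩ range φ).Finite := by
    refine ((hg d).image φ).subset ?_
    rintro _ ⟨hx, x, rfl⟩
    exact ⟨x, hinj ((hfg x).symm.trans hx), rfl⟩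
  exact hs (hdense.subset_of_isOpen_of_finite_inter ((hiso d).preimage hf) hfin hd.symm)

end Topology

theorem isOpen_singleton_apply {𝓕 : Set (Set ℕ)} (hcl : OmegaClosed 𝓕)
    (h𝓕 : ∀ F ∈ 𝓕, F = Ici (sInf F)) {S : Type*} [Semigroup S] [TopologicalSpace S]
    [T2Space S] (hsc : ∀ a : S, Continuous (fun x => a * x) ∧ Continuous (fun x => x * a))
    {φ : BF 𝓕 → S} (hφmul : ∀ x y : BF 𝓕, φ (BFmul hcl x y) = φ x * φ y)
    (hinj : Function.Injective φ) (hdense : Dense (range φ)) (c : BF 𝓕) : IsOpen {φ c} := by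
  obtain ⟨u, v, hcu, hvc, hfin⟩ := BF.exists_finite_setOf_not_fixed hcl h𝓕 c
  have hU : IsOpen ({s : S | s * φ u ≠ s} ∩ {s | φ v * s ≠ s}) :=
    (isOpen_ne_fun (hsc _).2 continuous_id).inter (isOpen_ne_fun (hsc _).1 continuous_id)
  refine hdense.isOpen_singleton_of_finite_inter hU ((hfin.image φ).subset ?_) ?_
  · rintro _ ⟨⟨hxu, hvx⟩, x, rfl⟩
    exact ⟨x, ⟨fun h => hxu (by rw [← hφmul, h]), fun h => hvx (by rw [← hφmul, h])⟩, rfl⟩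
  · exact ⟨fun h => hcu (hinj (by rw [hφmul, h])), fun h => hvc (hinj (by rw [hφmul, h]))⟩

theorem statement4_general (𝓕 : Set (Set ℕ)) (hcl : OmegaClosed 𝓕)
    (hne : ∀ F ∈ 𝓕, F.Nonempty) (hind : ∀ F ∈ 𝓕, InductiveSet F)
    {S : Type*} [Semigroup S] [TopologicalSpace S] [T2Space S]
    (hsc : ∀ a : S, Continuous (fun x => a * x) ∧ Continuous (fun x => x * a))
    (φ : BF 𝓕 → S) (hφmul : ∀ x y : BF 𝓕, φ (BFmul hcl x y) = φ x * φ y)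
    (hinj : Function.Injective φ) (hdense : Dense (Set.range φ)) :
    IsClosed (Set.range φ)ᶜ ∧
      ∀ x y : S, (x ∈ (Set.range φ)ᶜ ∨ y ∈ (Set.range φ)ᶜ) →
        x * y ∈ (Set.range φ)ᶜ := by
  have h𝓕 : ∀ F ∈ 𝓕, F = Ici (sInf F) := fun F hF => (hind F hF).eq_Ici_sInf (hne F hF)
  have hiso : ∀ c, IsOpen {φ c} := isOpen_singleton_apply hcl h𝓕 hsc hφmul hinj hdense
  have hopen : IsOpen (range φ) := by
    rw [← iUnion_singleton_eq_range]
    exact isOpen_iUnion hiso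
  have hBI : ∀ b t, t ∉ range φ → φ b * t ∉ range φ := fun b _ =>
    apply_notMem_range_of_finite_fibers hinj hdense hiso (hsc _).1 (fun x => (hφmul b x).symm)
      (BF.finite_setOf_mul_left_eq hcl h𝓕 b)
  have hIB : ∀ b s, s ∉ range φ → s * φ b ∉ range φ := fun b _ =>
    apply_notMem_range_of_finite_fibers hinj hdense hiso (hsc _).2 (fun x => (hφmul x b).symm)
      (BF.finite_setOf_mul_right_eq hcl h𝓕 b)
  refine ⟨hopen.isClosed_compl, ?_⟩
  rintro s t (hs | ht)
  · exact DenseRange.induction_on (p := fun u => s * u ∉ range φ) hdense t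
      (hopen.isClosed_compl.preimage (hsc s).1) (fun b => hIB b s hs)
  · exact DenseRange.induction_on (p := fun u => u * t ∉ range φ) hdense s
      (hopen.isClosed_compl.preimage (hsc t).2) (fun b => hBI b t ht)

/-- Proposition 2.4: if a Hausdorff semitopological semigroup `S` contains `B_ω^𝓕`
(for an ω-closed family `𝓕` of nonempty inductive subsets of `ω`) as a proper dense
subsemigroup, then `I = S \ B_ω^𝓕` is a closed two-sided ideal of `S`. -/
theorem statement4 (𝓕 : Set (Set ℕ)) (hcl : OmegaClosed 𝓕)
    (hne : ∀ F ∈ 𝓕, F.Nonempty) (hind : ∀ F ∈ 𝓕, InductiveSet F)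
    {S : Type*} [Semigroup S] [TopologicalSpace S] [T2Space S]
    (hsc : ∀ a : S, Continuous (fun x => a * x) ∧ Continuous (fun x => x * a))
    (φ : BF 𝓕 → S) (hφmul : ∀ x y : BF 𝓕, φ (BFmul hcl x y) = φ x * φ y)
    (hinj : Function.Injective φ) (hdense : Dense (Set.range φ))
    (hproper : Set.range φ ≠ Set.univ) :
    IsClosed (Set.range φ)ᶜ ∧
      ∀ x y : S, (x ∈ (Set.range φ)ᶜ ∨ y ∈ (Set.range φ)ᶜ) →
        x * y ∈ (Set.range φ)ᶜ :=
  statement4_general 𝓕 hcl hne hind hsc φ hφmul hinj hdense
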